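/- Fix a reference type x° ∈ X and let f : ℤ^X → ℝ be the full-type count f(z) = z(x°) = [S]_z. Then for every z : X → ℕ with ∑_{y∈X} z(y) = N, the recombination generator satisfies (𝒢f)(z) = ∑_{G⊆S} (ρ_G/(2N)) ([G]_z · [Ḡ]_z − N · [S]_z). In particular, for the Moran model with recombination, the expected type frequencies obey d/dt E[[S]_t] = ∑_{G⊆S} E[(ρ_G/(2N)) ([G]_t [Ḡ]_t − N [S]_t)]. -/
import Mathlib


open scoped Classical

noncomputable section

namespace MoranRecomb

variable {n : ℕ} {Xa : Fin n → Type*}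

/-- The recombination map `p_G`. -/
def recMap (G : Finset (Fin n)) (x y : ∀ i, Xa i) : ∀ i, Xa i :=
  fun i => if i ∈ G then x i else y i

/-- The delta (point) counting measure. -/
def delta {α : Type*} (x : α) : α → ℤ := fun w => if w = x then 1 else 0

/-- The jump vector `v_{G,x,y}` of a recombination event. -/
def jump (G : Finset (Fin n)) (x y : ∀ i, Xa i) : (∀ i, Xa i) → ℤ :=
  fun w => delta (recMap G x y) w + delta (recMap Gᶜ x y) w - delta x w - delta y w

/-- The recombination generator `𝒢`. -/
def recGen [∀ i, Fintype (Xa i)] (ρ : Finset (Fin n) → ℝ) (N : ℝ)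
    (f : ((∀ i, Xa i) → ℤ) → ℝ) (z : (∀ i, Xa i) → ℤ) : ℝ :=
  ∑ G : Finset (Fin n), ∑ x : ∀ i, Xa i, ∑ y : ∀ i, Xa i,
    ρ G / (4 * N) * (z x : ℝ) * (z y : ℝ) * (f (z + jump G x y) - f z)

/-- `[A]_z = (π_A.z)(π_A(x°))` of an integer configuration, as a real number. -/
def margRZ [∀ i, Fintype (Xa i)] (A : Finset (Fin n)) (z : (∀ i, Xa i) → ℤ)
    (u : ∀ i, Xa i) : ℝ :=
  ∑ y : ∀ i, Xa i, if ∀ i ∈ A, y i = u i then (z y : ℝ) else 0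

lemma recMap_eq_iff (G : Finset (Fin n)) (x y x0 : ∀ i, Xa i) :
    x0 = recMap G x y ↔ (∀ i ∈ G, x i = x0 i) ∧ (∀ i ∈ Gᶜ, y i = x0 i) := by
  simp only [funext_iff, recMap, Finset.mem_compl]
  constructor
  · intro h
    refine ⟨fun i hi => ?_, fun i hi => ?_⟩
    · have := h i; rw [if_pos hi] at this; exact this.symm
    · have := h i; rw [if_neg hi] at this; exact this.symm
  · rintro ⟨h1, h2⟩ i
    by_cases hi : i ∈ G
    · rw [if_pos hi, h1 i hi]
    · rw [if_neg hi, h2 i hi]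

lemma sum_prod [∀ i, Fintype (Xa i)] (G : Finset (Fin n))
    (z : (∀ i, Xa i) → ℤ) (x0 : ∀ i, Xa i) :
    (∑ x : ∀ i, Xa i, ∑ y : ∀ i, Xa i, (z x : ℝ) * (z y : ℝ) *
      (if x0 = recMap G x y then 1 else 0))
    = margRZ G z x0 * margRZ Gᶜ z x0 := by
  rw [margRZ, margRZ, Finset.sum_mul_sum]
  refine Finset.sum_congr rfl fun x _ => Finset.sum_congr rfl fun y _ => ?_
  simp only [recMap_eq_iff, Finset.mem_compl]
  split_ifs <;> first | tauto | ring

lemma margRZ_univ [∀ i, Fintype (Xa i)] (z : (∀ i, Xa i) → ℤ) (x0 : ∀ i, Xa i) :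
    margRZ Finset.univ z x0 = (z x0 : ℝ) := by
  rw [margRZ]
  rw [Finset.sum_eq_single x0]
  · simp
  · intro y _ hy
    rw [if_neg]
    intro h
    exact hy (funext fun i => h i (Finset.mem_univ i))
  · simp

/-- The recombination generator applied to the full-type count `f(z) = z(x°) = [S]_z`:
`(𝒢f)(z) = ∑_G (ρ_G/(2N)) ([G]_z [Ḡ]_z − N [S]_z)`, which gives the dynamics of the
expected type frequencies in the Moran model with recombination. -/
theorem mean_dynamics (hn : 1 ≤ n)
    [∀ i, Fintype (Xa i)] [∀ i, Nonempty (Xa i)]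
    (x0 : ∀ i, Xa i)
    (ρ : Finset (Fin n) → ℝ) (hρ0 : ∀ G, 0 ≤ ρ G) (hρc : ∀ G, ρ G = ρ Gᶜ)
    (hρe : ρ ∅ = 0) (hρu : ρ Finset.univ = 0)
    (N : ℝ) (hN : 0 < N)
    (z : (∀ i, Xa i) → ℕ) (hz : ∑ y : ∀ i, Xa i, (z y : ℝ) = N) :
    recGen ρ N (fun w => (w x0 : ℝ)) (fun y => (z y : ℤ))
      = ∑ G : Finset (Fin n), ρ G / (2 * N) *
          (margRZ G (fun y => (z y : ℤ)) x0 * margRZ Gᶜ (fun y => (z y : ℤ)) x0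
            - N * margRZ Finset.univ (fun y => (z y : ℤ)) x0) := by
  set zZ : (∀ i, Xa i) → ℤ := fun y => (z y : ℤ) with hzZ
  rw [recGen]
  refine Finset.sum_congr rfl fun G _ => ?_
  have hstep : ∀ x y : ∀ i, Xa i,
      (((zZ + jump G x y) x0 : ℤ) : ℝ) - ((zZ x0 : ℤ) : ℝ)
      = (if x0 = recMap G x y then (1:ℝ) else 0)
        + (if x0 = recMap Gᶜ x y then 1 else 0)
        - (if x0 = x then 1 else 0) - (if x0 = y then 1 else 0) := by
    intro x y
    simp only [Pi.add_apply, jump, delta]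
    push_cast
    ring
  have hsummand : ∀ x y : ∀ i, Xa i,
      ρ G / (4 * N) * (zZ x : ℝ) * (zZ y : ℝ) *
        ((((zZ + jump G x y) x0 : ℤ) : ℝ) - ((zZ x0 : ℤ) : ℝ))
      = ρ G / (4 * N) *
          ((zZ x : ℝ) * (zZ y : ℝ) * (if x0 = recMap G x y then (1:ℝ) else 0)
          + (zZ x : ℝ) * (zZ y : ℝ) * (if x0 = recMap Gᶜ x y then 1 else 0)
          - (zZ x : ℝ) * (zZ y : ℝ) * (if x0 = x then 1 else 0)
          - (zZ x : ℝ) * (zZ y : ℝ) * (if x0 = y then 1 else 0)) := by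
    intro x y
    rw [hstep]
    ring
  calc (∑ x : ∀ i, Xa i, ∑ y : ∀ i, Xa i,
        ρ G / (4 * N) * (zZ x : ℝ) * (zZ y : ℝ) *
          ((((zZ + jump G x y) x0 : ℤ) : ℝ) - ((zZ x0 : ℤ) : ℝ)))
      = ρ G / (4 * N) *
        ((∑ x : ∀ i, Xa i, ∑ y : ∀ i, Xa i,
            (zZ x : ℝ) * (zZ y : ℝ) * (if x0 = recMap G x y then (1:ℝ) else 0))
        + (∑ x : ∀ i, Xa i, ∑ y : ∀ i, Xa i,
            (zZ x : ℝ) * (zZ y : ℝ) * (if x0 = recMap Gᶜ x y then (1:ℝ) else 0))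
        - (∑ x : ∀ i, Xa i, ∑ y : ∀ i, Xa i,
            (zZ x : ℝ) * (zZ y : ℝ) * (if x0 = x then (1:ℝ) else 0))
        - (∑ x : ∀ i, Xa i, ∑ y : ∀ i, Xa i,
            (zZ x : ℝ) * (zZ y : ℝ) * (if x0 = y then (1:ℝ) else 0))) := by
        simp only [hsummand, ← Finset.mul_sum, Finset.sum_add_distrib,
          Finset.sum_sub_distrib]
    _ = ρ G / (2 * N) *
          (margRZ G zZ x0 * margRZ Gᶜ zZ x0 - N * margRZ Finset.univ zZ x0) := by
        rw [sum_prod, sum_prod]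
        have hzN : ∑ y : ∀ i, Xa i, ((zZ y : ℤ) : ℝ) = N := by
          rw [← hz]; simp [hzZ]
        have hpoint : (∑ x : ∀ i, Xa i,
            ((zZ x : ℤ) : ℝ) * (if x0 = x then (1:ℝ) else 0)) = (zZ x0 : ℝ) := by
          rw [Finset.sum_eq_single x0]
          · simp
          · intro x _ hx
            rw [if_neg (fun h => hx h.symm), mul_zero]
          · simp
        have h3 : (∑ x : ∀ i, Xa i, ∑ y : ∀ i, Xa i,
            (zZ x : ℝ) * (zZ y : ℝ) * (if x0 = x then (1:ℝ) else 0))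
            = (zZ x0 : ℝ) * N := by
          have hx : ∀ x : ∀ i, Xa i, (∑ y : ∀ i, Xa i,
              ((zZ x : ℤ) : ℝ) * ((zZ y : ℤ) : ℝ) * (if x0 = x then (1:ℝ) else 0))
              = ((zZ x : ℤ) : ℝ) * (if x0 = x then (1:ℝ) else 0) * N := by
            intro x
            rw [← hzN, Finset.mul_sum]
            exact Finset.sum_congr rfl fun y _ => by ring
          rw [Finset.sum_congr rfl fun x _ => hx x, ← Finset.sum_mul, hpoint]
        have h4 : (∑ x : ∀ i, Xa i, ∑ y : ∀ i, Xa i,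
            (zZ x : ℝ) * (zZ y : ℝ) * (if x0 = y then (1:ℝ) else 0))
            = (zZ x0 : ℝ) * N := by
          rw [Finset.sum_comm]
          have hy : ∀ y : ∀ i, Xa i, (∑ x : ∀ i, Xa i,
              ((zZ x : ℤ) : ℝ) * ((zZ y : ℤ) : ℝ) * (if x0 = y then (1:ℝ) else 0))
              = ((zZ y : ℤ) : ℝ) * (if x0 = y then (1:ℝ) else 0) * N := by
            intro y
            rw [← hzN, Finset.mul_sum]
            exact Finset.sum_congr rfl fun x _ => by ring
          rw [Finset.sum_congr rfl fun y _ => hy y, ← Finset.sum_mul, hpoint]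
        rw [h3, h4, margRZ_univ, compl_compl]
        have hN' : N ≠ 0 := ne_of_gt hN
        field_simp
        ring

end MoranRecomb
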